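/- (Antiadmissibility of Identity.) Let C be the calculus consisting of Cut, the common structural rules of Weakening and Contraction, and all elimination rules, and let C' be C extended by Identity. Then for every set S of sequents, the empty sequent ∅▷∅ is derivable from S in C' if and only if it is derivable from S in C. -/
import Mathlib


/-- Propositional formulas: atoms, conjunction, disjunction, De Morgan negation, ⊤, ⊥. -/
inductive Fm : Type where
  | atom : ℕ → Fm
  | conj : Fm → Fm → Fm
  | disj : Fm → Fm → Fm
  | neg  : Fm → Fm
  | top  : Fm
  | bot  : Fm
deriving DecidableEq

/-- A sequent is a pair of finite multisets of formulas. -/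
abbrev Sqnt : Type := Multiset Fm × Multiset Fm

/-- A formula is an atom. -/
def isAtom (φ : Fm) : Prop := ∃ i, φ = Fm.atom i

/-- A sequent is atomic if every formula in it is an atom. -/
def AtomicSeq (s : Sqnt) : Prop := (∀ φ ∈ s.1, isAtom φ) ∧ (∀ φ ∈ s.2, isAtom φ)

/-- Derivability of a sequent from a set `S` of sequents in a super-Belnap calculus.
The calculus always contains the common structural rules of Weakening and Contraction.
The `Prop` flags switch further rules on and off:
`i` = the introduction rules (incl. the axioms `∅▷⊤` and `⊥▷∅`),
`e` = the elimination rules, `d` = Identity, `c` = Cut, `l` = Limited Cut. -/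
inductive Drv (i e d c l : Prop) (S : Set Sqnt) : Sqnt → Prop where
  | prem {s} : s ∈ S → Drv i e d c l S s
  -- common structural rules: Weakening and Contraction
  | wkL (φ : Fm) {Γ Δ} : Drv i e d c l S (Γ, Δ) → Drv i e d c l S (φ ::ₘ Γ, Δ)
  | wkR (φ : Fm) {Γ Δ} : Drv i e d c l S (Γ, Δ) → Drv i e d c l S (Γ, φ ::ₘ Δ)
  | ctrL {φ Γ Δ} : Drv i e d c l S (φ ::ₘ φ ::ₘ Γ, Δ) → Drv i e d c l S (φ ::ₘ Γ, Δ)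
  | ctrR {φ Γ Δ} : Drv i e d c l S (Γ, φ ::ₘ φ ::ₘ Δ) → Drv i e d c l S (Γ, φ ::ₘ Δ)
  -- introduction rules
  | andR {φ ψ Γ Δ} : i → Drv i e d c l S (Γ, φ ::ₘ Δ) → Drv i e d c l S (Γ, ψ ::ₘ Δ) →
      Drv i e d c l S (Γ, Fm.conj φ ψ ::ₘ Δ)
  | andL {φ ψ Γ Δ} : i → Drv i e d c l S (φ ::ₘ ψ ::ₘ Γ, Δ) →
      Drv i e d c l S (Fm.conj φ ψ ::ₘ Γ, Δ)
  | orL {φ ψ Γ Δ} : i → Drv i e d c l S (φ ::ₘ Γ, Δ) → Drv i e d c l S (ψ ::ₘ Γ, Δ) →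
      Drv i e d c l S (Fm.disj φ ψ ::ₘ Γ, Δ)
  | orR {φ ψ Γ Δ} : i → Drv i e d c l S (Γ, φ ::ₘ ψ ::ₘ Δ) →
      Drv i e d c l S (Γ, Fm.disj φ ψ ::ₘ Δ)
  | negR {φ Γ Δ} : i → Drv i e d c l S (φ ::ₘ Γ, Δ) → Drv i e d c l S (Γ, Fm.neg φ ::ₘ Δ)
  | negL {φ Γ Δ} : i → Drv i e d c l S (Γ, φ ::ₘ Δ) → Drv i e d c l S (Fm.neg φ ::ₘ Γ, Δ)
  | topR : i → Drv i e d c l S (0, {Fm.top})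
  | botL : i → Drv i e d c l S ({Fm.bot}, 0)
  -- elimination rules
  | andRE1 {φ ψ Γ Δ} : e → Drv i e d c l S (Γ, Fm.conj φ ψ ::ₘ Δ) → Drv i e d c l S (Γ, φ ::ₘ Δ)
  | andRE2 {φ ψ Γ Δ} : e → Drv i e d c l S (Γ, Fm.conj φ ψ ::ₘ Δ) → Drv i e d c l S (Γ, ψ ::ₘ Δ)
  | andLE {φ ψ Γ Δ} : e → Drv i e d c l S (Fm.conj φ ψ ::ₘ Γ, Δ) →
      Drv i e d c l S (φ ::ₘ ψ ::ₘ Γ, Δ)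
  | orLE1 {φ ψ Γ Δ} : e → Drv i e d c l S (Fm.disj φ ψ ::ₘ Γ, Δ) → Drv i e d c l S (φ ::ₘ Γ, Δ)
  | orLE2 {φ ψ Γ Δ} : e → Drv i e d c l S (Fm.disj φ ψ ::ₘ Γ, Δ) → Drv i e d c l S (ψ ::ₘ Γ, Δ)
  | orRE {φ ψ Γ Δ} : e → Drv i e d c l S (Γ, Fm.disj φ ψ ::ₘ Δ) →
      Drv i e d c l S (Γ, φ ::ₘ ψ ::ₘ Δ)
  | negRE {φ Γ Δ} : e → Drv i e d c l S (Γ, Fm.neg φ ::ₘ Δ) → Drv i e d c l S (φ ::ₘ Γ, Δ)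
  | negLE {φ Γ Δ} : e → Drv i e d c l S (Fm.neg φ ::ₘ Γ, Δ) → Drv i e d c l S (Γ, φ ::ₘ Δ)
  | topLE {Γ Δ} : e → Drv i e d c l S (Fm.top ::ₘ Γ, Δ) → Drv i e d c l S (Γ, Δ)
  | botRE {Γ Δ} : e → Drv i e d c l S (Γ, Fm.bot ::ₘ Δ) → Drv i e d c l S (Γ, Δ)
  -- Identity
  | ident (φ : Fm) : d → Drv i e d c l S ({φ}, {φ})
  -- Cut
  | cut {φ Γ Γ' Δ Δ'} : c → Drv i e d c l S (Γ, φ ::ₘ Δ) → Drv i e d c l S (φ ::ₘ Γ', Δ') →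
      Drv i e d c l S (Γ + Γ', Δ + Δ')
  -- Limited Cut
  | lcut1 {φ Γ Δ} : l → Drv i e d c l S (0, {φ}) → Drv i e d c l S (φ ::ₘ Γ, Δ) →
      Drv i e d c l S (Γ, Δ)
  | lcut2 {φ Γ Δ} : l → Drv i e d c l S (Γ, φ ::ₘ Δ) → Drv i e d c l S ({φ}, 0) →
      Drv i e d c l S (Γ, Δ)

section Aux
variable {i e d c l : Prop} {S T : Set Sqnt}

/-- Transitivity of derivability. -/
lemma drv_trans {s} (h : Drv i e d c l T s) (hT : ∀ t ∈ T, Drv i e d c l S t) :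
    Drv i e d c l S s := by
  induction h with
  | prem hs => exact hT _ hs
  | wkL φ _ ih => exact ih.wkL φ
  | wkR φ _ ih => exact ih.wkR φ
  | ctrL _ ih => exact ih.ctrL
  | ctrR _ ih => exact ih.ctrR
  | andR hi _ _ ih1 ih2 => exact .andR hi ih1 ih2
  | andL hi _ ih => exact .andL hi ih
  | orL hi _ _ ih1 ih2 => exact .orL hi ih1 ih2
  | orR hi _ ih => exact .orR hi ih
  | negR hi _ ih => exact .negR hi ih
  | negL hi _ ih => exact .negL hi ih
  | topR hi => exact .topR hi
  | botL hi => exact .botL hi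
  | andRE1 he _ ih => exact .andRE1 he ih
  | andRE2 he _ ih => exact .andRE2 he ih
  | andLE he _ ih => exact .andLE he ih
  | orLE1 he _ ih => exact .orLE1 he ih
  | orLE2 he _ ih => exact .orLE2 he ih
  | orRE he _ ih => exact .orRE he ih
  | negRE he _ ih => exact .negRE he ih
  | negLE he _ ih => exact .negLE he ih
  | topLE he _ ih => exact .topLE he ih
  | botRE he _ ih => exact .botRE he ih
  | ident φ hd => exact .ident φ hd
  | cut hc _ _ ih1 ih2 => exact .cut hc ih1 ih2
  | lcut1 hl _ _ ih1 ih2 => exact .lcut1 hl ih1 ih2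
  | lcut2 hl _ _ ih1 ih2 => exact .lcut2 hl ih1 ih2

lemma Drv.dmono {s} (h : Drv i e d c l T s) (hsub : T ⊆ S) : Drv i e d c l S s :=
  drv_trans h (fun _ ht => .prem (hsub ht))

/-- Adding the Identity rule is harmless for re-deriving a derivation without it. -/
lemma drv_of_noid {s} (h : Drv False True False True False S s) :
    Drv False True True True False S s := by
  induction h with
  | prem hs => exact .prem hs
  | wkL φ _ ih => exact ih.wkL φ
  | wkR φ _ ih => exact ih.wkR φ
  | ctrL _ ih => exact ih.ctrL
  | ctrR _ ih => exact ih.ctrR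
  | andR hi => exact hi.elim
  | andL hi => exact hi.elim
  | orL hi => exact hi.elim
  | orR hi => exact hi.elim
  | negR hi => exact hi.elim
  | negL hi => exact hi.elim
  | topR hi => exact hi.elim
  | botL hi => exact hi.elim
  | andRE1 he _ ih => exact .andRE1 he ih
  | andRE2 he _ ih => exact .andRE2 he ih
  | andLE he _ ih => exact .andLE he ih
  | orLE1 he _ ih => exact .orLE1 he ih
  | orLE2 he _ ih => exact .orLE2 he ih
  | orRE he _ ih => exact .orRE he ih
  | negRE he _ ih => exact .negRE he ih
  | negLE he _ ih => exact .negLE he ih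
  | topLE he _ ih => exact .topLE he ih
  | botRE he _ ih => exact .botRE he ih
  | ident φ hd => exact hd.elim
  | cut hc _ _ ih1 ih2 => exact .cut hc ih1 ih2
  | lcut1 hl => exact hl.elim
  | lcut2 hl => exact hl.elim

/-- Extraction of a finite set of premises. -/
lemma drv_finite {s} (h : Drv i e d c l S s) :
    ∃ T : Finset Sqnt, ↑T ⊆ S ∧ Drv i e d c l (↑T : Set Sqnt) s := by
  induction h with
  | prem hs => exact ⟨{_}, by simpa using hs, .prem (by simp)⟩
  | wkL φ _ ih => obtain ⟨T, h1, h2⟩ := ih; exact ⟨T, h1, h2.wkL φ⟩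
  | wkR φ _ ih => obtain ⟨T, h1, h2⟩ := ih; exact ⟨T, h1, h2.wkR φ⟩
  | ctrL _ ih => obtain ⟨T, h1, h2⟩ := ih; exact ⟨T, h1, h2.ctrL⟩
  | ctrR _ ih => obtain ⟨T, h1, h2⟩ := ih; exact ⟨T, h1, h2.ctrR⟩
  | andR hi _ _ ih1 ih2 =>
    obtain ⟨T1, h1, h2⟩ := ih1; obtain ⟨T2, h3, h4⟩ := ih2
    exact ⟨T1 ∪ T2, by simp [Set.union_subset_iff, h1, h3],
      .andR hi (h2.dmono (by intro x hx; simp only [Finset.coe_union, Set.mem_union]; tauto)) (h4.dmono (by intro x hx; simp only [Finset.coe_union, Set.mem_union]; tauto))⟩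
  | andL hi _ ih => obtain ⟨T, h1, h2⟩ := ih; exact ⟨T, h1, .andL hi h2⟩
  | orL hi _ _ ih1 ih2 =>
    obtain ⟨T1, h1, h2⟩ := ih1; obtain ⟨T2, h3, h4⟩ := ih2
    exact ⟨T1 ∪ T2, by simp [Set.union_subset_iff, h1, h3],
      .orL hi (h2.dmono (by intro x hx; simp only [Finset.coe_union, Set.mem_union]; tauto)) (h4.dmono (by intro x hx; simp only [Finset.coe_union, Set.mem_union]; tauto))⟩
  | orR hi _ ih => obtain ⟨T, h1, h2⟩ := ih; exact ⟨T, h1, .orR hi h2⟩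
  | negR hi _ ih => obtain ⟨T, h1, h2⟩ := ih; exact ⟨T, h1, .negR hi h2⟩
  | negL hi _ ih => obtain ⟨T, h1, h2⟩ := ih; exact ⟨T, h1, .negL hi h2⟩
  | topR hi => exact ⟨∅, by simp, .topR hi⟩
  | botL hi => exact ⟨∅, by simp, .botL hi⟩
  | andRE1 he _ ih => obtain ⟨T, h1, h2⟩ := ih; exact ⟨T, h1, .andRE1 he h2⟩
  | andRE2 he _ ih => obtain ⟨T, h1, h2⟩ := ih; exact ⟨T, h1, .andRE2 he h2⟩
  | andLE he _ ih => obtain ⟨T, h1, h2⟩ := ih; exact ⟨T, h1, .andLE he h2⟩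
  | orLE1 he _ ih => obtain ⟨T, h1, h2⟩ := ih; exact ⟨T, h1, .orLE1 he h2⟩
  | orLE2 he _ ih => obtain ⟨T, h1, h2⟩ := ih; exact ⟨T, h1, .orLE2 he h2⟩
  | orRE he _ ih => obtain ⟨T, h1, h2⟩ := ih; exact ⟨T, h1, .orRE he h2⟩
  | negRE he _ ih => obtain ⟨T, h1, h2⟩ := ih; exact ⟨T, h1, .negRE he h2⟩
  | negLE he _ ih => obtain ⟨T, h1, h2⟩ := ih; exact ⟨T, h1, .negLE he h2⟩
  | topLE he _ ih => obtain ⟨T, h1, h2⟩ := ih; exact ⟨T, h1, .topLE he h2⟩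
  | botRE he _ ih => obtain ⟨T, h1, h2⟩ := ih; exact ⟨T, h1, .botRE he h2⟩
  | ident φ hd => exact ⟨∅, by simp, .ident φ hd⟩
  | cut hc _ _ ih1 ih2 =>
    obtain ⟨T1, h1, h2⟩ := ih1; obtain ⟨T2, h3, h4⟩ := ih2
    exact ⟨T1 ∪ T2, by simp [Set.union_subset_iff, h1, h3],
      .cut hc (h2.dmono (by intro x hx; simp only [Finset.coe_union, Set.mem_union]; tauto)) (h4.dmono (by intro x hx; simp only [Finset.coe_union, Set.mem_union]; tauto))⟩
  | lcut1 hl _ _ ih1 ih2 =>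
    obtain ⟨T1, h1, h2⟩ := ih1; obtain ⟨T2, h3, h4⟩ := ih2
    exact ⟨T1 ∪ T2, by simp [Set.union_subset_iff, h1, h3],
      .lcut1 hl (h2.dmono (by intro x hx; simp only [Finset.coe_union, Set.mem_union]; tauto)) (h4.dmono (by intro x hx; simp only [Finset.coe_union, Set.mem_union]; tauto))⟩
  | lcut2 hl _ _ ih1 ih2 =>
    obtain ⟨T1, h1, h2⟩ := ih1; obtain ⟨T2, h3, h4⟩ := ih2
    exact ⟨T1 ∪ T2, by simp [Set.union_subset_iff, h1, h3],
      .lcut2 hl (h2.dmono (by intro x hx; simp only [Finset.coe_union, Set.mem_union]; tauto)) (h4.dmono (by intro x hx; simp only [Finset.coe_union, Set.mem_union]; tauto))⟩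

end Aux
/-- Classical Boolean evaluation of formulas. -/
def fval (v : ℕ → Bool) : Fm → Bool
  | .atom i => v i
  | .conj a b => fval v a && fval v b
  | .disj a b => fval v a || fval v b
  | .neg a => !fval v a
  | .top => true
  | .bot => false

/-- Truth of a sequent under a classical valuation. -/
def seqTrue (v : ℕ → Bool) (s : Sqnt) : Prop :=
  (∀ φ ∈ s.1, fval v φ = true) → ∃ φ ∈ s.2, fval v φ = true

open Multiset in
/-- Soundness of all the rules with respect to classical valuations. -/
lemma drv_sound {i e d c l : Prop} {S : Set Sqnt} {s} (h : Drv i e d c l S s)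
    (v : ℕ → Bool) (hS : ∀ t ∈ S, seqTrue v t) : seqTrue v s := by
  induction h with
  | prem hs => exact hS _ hs
  | wkL φ _ ih =>
    intro h; exact ih (fun ψ hψ => h ψ (mem_cons_of_mem hψ))
  | wkR φ _ ih =>
    intro h; obtain ⟨ψ, hψ, hv⟩ := ih h; exact ⟨ψ, mem_cons_of_mem hψ, hv⟩
  | ctrL _ ih =>
    intro h
    refine ih fun ψ hψ => h ψ ?_
    rcases mem_cons.mp hψ with rfl | h2
    · exact mem_cons_self _ _
    · exact h2
  | ctrR _ ih =>
    intro h; obtain ⟨ψ, hψ, hv⟩ := ih h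
    refine ⟨ψ, ?_, hv⟩
    rcases mem_cons.mp hψ with rfl | h2
    · simp
    · exact h2
  | @andR φ ψ Γ Δ _ _ _ ih1 ih2 =>
    intro h
    obtain ⟨a, ha, hva⟩ := ih1 h
    rcases mem_cons.mp ha with rfl | hm
    · obtain ⟨b, hb, hvb⟩ := ih2 h
      rcases mem_cons.mp hb with rfl | hm2
      · exact ⟨_, mem_cons_self _ _, by simp [fval, hva, hvb]⟩
      · exact ⟨b, mem_cons_of_mem hm2, hvb⟩
    · exact ⟨a, mem_cons_of_mem hm, hva⟩
  | @andL φ ψ Γ Δ _ _ ih =>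
    intro h
    have hc := h _ (mem_cons_self _ _)
    simp [fval] at hc
    apply ih
    intro χ hχ
    rcases mem_cons.mp hχ with rfl | hm
    · exact hc.1
    · rcases mem_cons.mp hm with rfl | hm2
      · exact hc.2
      · exact h _ (mem_cons_of_mem hm2)
  | @orL φ ψ Γ Δ _ _ _ ih1 ih2 =>
    intro h
    have hd := h _ (mem_cons_self _ _)
    simp [fval] at hd
    rcases hd with hd | hd
    · refine ih1 fun χ hχ => ?_
      rcases mem_cons.mp hχ with rfl | hm
      · exact hd
      · exact h _ (mem_cons_of_mem hm)
    · refine ih2 fun χ hχ => ?_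
      rcases mem_cons.mp hχ with rfl | hm
      · exact hd
      · exact h _ (mem_cons_of_mem hm)
  | @orR φ ψ Γ Δ _ _ ih =>
    intro h
    obtain ⟨a, ha, hv⟩ := ih h
    rcases mem_cons.mp ha with rfl | hm
    · exact ⟨_, mem_cons_self _ _, by simp [fval, hv]⟩
    · rcases mem_cons.mp hm with rfl | hm2
      · exact ⟨_, mem_cons_self _ _, by simp [fval, hv]⟩
      · exact ⟨a, mem_cons_of_mem hm2, hv⟩
  | @negR φ Γ Δ _ _ ih =>
    intro h
    by_cases hb : fval v φ = true
    · have h' : ∀ χ ∈ φ ::ₘ Γ, fval v χ = true := by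
        intro χ hχ
        rcases mem_cons.mp hχ with rfl | hm
        · exact hb
        · exact h _ hm
      obtain ⟨a, ha, hv⟩ := ih h'
      exact ⟨a, mem_cons_of_mem ha, hv⟩
    · exact ⟨_, mem_cons_self _ _, by simp [fval]; simpa using hb⟩
  | @negL φ Γ Δ _ _ ih =>
    intro h
    have hn := h _ (mem_cons_self _ _)
    simp [fval] at hn
    obtain ⟨a, ha, hv⟩ := ih (fun χ hχ => h _ (mem_cons_of_mem hχ))
    rcases mem_cons.mp ha with rfl | hm
    · rw [hn] at hv; exact absurd hv (by simp)
    · exact ⟨a, hm, hv⟩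
  | topR _ => intro _; exact ⟨Fm.top, by simp, rfl⟩
  | botL _ =>
    intro h; have := h Fm.bot (by simp); simp [fval] at this
  | @andRE1 φ ψ Γ Δ _ _ ih =>
    intro h
    obtain ⟨a, ha, hv⟩ := ih h
    rcases mem_cons.mp ha with rfl | hm
    · simp [fval] at hv; exact ⟨φ, mem_cons_self _ _, hv.1⟩
    · exact ⟨a, mem_cons_of_mem hm, hv⟩
  | @andRE2 φ ψ Γ Δ _ _ ih =>
    intro h
    obtain ⟨a, ha, hv⟩ := ih h
    rcases mem_cons.mp ha with rfl | hm
    · simp [fval] at hv; exact ⟨ψ, mem_cons_self _ _, hv.2⟩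
    · exact ⟨a, mem_cons_of_mem hm, hv⟩
  | @andLE φ ψ Γ Δ _ _ ih =>
    intro h
    apply ih
    intro χ hχ
    rcases mem_cons.mp hχ with rfl | hm
    · simp [fval, h _ (mem_cons_self _ _), h _ (mem_cons_of_mem (mem_cons_self _ _))]
    · exact h _ (mem_cons_of_mem (mem_cons_of_mem hm))
  | @orLE1 φ ψ Γ Δ _ _ ih =>
    intro h
    apply ih
    intro χ hχ
    rcases mem_cons.mp hχ with rfl | hm
    · simp [fval, h _ (mem_cons_self _ _)]
    · exact h _ (mem_cons_of_mem hm)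
  | @orLE2 φ ψ Γ Δ _ _ ih =>
    intro h
    apply ih
    intro χ hχ
    rcases mem_cons.mp hχ with rfl | hm
    · simp [fval, h _ (mem_cons_self _ _)]
    · exact h _ (mem_cons_of_mem hm)
  | @orRE φ ψ Γ Δ _ _ ih =>
    intro h
    obtain ⟨a, ha, hv⟩ := ih h
    rcases mem_cons.mp ha with rfl | hm
    · simp [fval] at hv
      rcases hv with hv | hv
      · exact ⟨φ, mem_cons_self _ _, hv⟩
      · exact ⟨ψ, mem_cons_of_mem (mem_cons_self _ _), hv⟩
    · exact ⟨a, mem_cons_of_mem (mem_cons_of_mem hm), hv⟩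
  | @negRE φ Γ Δ _ _ ih =>
    intro h
    have hφ : fval v φ = true := h _ (mem_cons_self _ _)
    obtain ⟨a, ha, hv⟩ := ih (fun χ hχ => h _ (mem_cons_of_mem hχ))
    rcases mem_cons.mp ha with rfl | hm
    · simp [fval, hφ] at hv
    · exact ⟨a, hm, hv⟩
  | @negLE φ Γ Δ _ _ ih =>
    intro h
    by_cases hb : fval v φ = true
    · exact ⟨φ, mem_cons_self _ _, hb⟩
    · have h' : ∀ χ ∈ Fm.neg φ ::ₘ Γ, fval v χ = true := by
        intro χ hχ
        rcases mem_cons.mp hχ with rfl | hm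
        · simp only [fval]; simpa using hb
        · exact h _ hm
      obtain ⟨a, ha, hv⟩ := ih h'
      exact ⟨a, mem_cons_of_mem ha, hv⟩
  | topLE _ _ ih =>
    intro h
    apply ih
    intro χ hχ
    rcases mem_cons.mp hχ with rfl | hm
    · rfl
    · exact h _ hm
  | botRE _ _ ih =>
    intro h
    obtain ⟨a, ha, hv⟩ := ih h
    rcases mem_cons.mp ha with rfl | hm
    · simp [fval] at hv
    · exact ⟨a, hm, hv⟩
  | ident φ _ =>
    intro h; exact ⟨φ, by simp, h φ (by simp)⟩
  | @cut φ Γ Γ' Δ Δ' _ _ _ ih1 ih2 =>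
    intro h
    obtain ⟨a, ha, hv⟩ := ih1 (fun ψ hψ => h ψ (by simp [hψ]))
    rcases mem_cons.mp ha with heq | hm
    · have hφv : fval v φ = true := heq ▸ hv
      have h' : ∀ χ ∈ φ ::ₘ Γ', fval v χ = true := by
        intro χ hχ
        rcases mem_cons.mp hχ with rfl | hm2
        · exact hφv
        · exact h χ (by simp [hm2])
      obtain ⟨b, hb, hv2⟩ := ih2 h'
      exact ⟨b, by simp [hb], hv2⟩
    · exact ⟨a, by simp [hm], hv⟩
  | @lcut1 φ Γ Δ _ _ _ ih1 ih2 =>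
    intro h
    have hφ : fval v φ = true := by
      obtain ⟨a, ha, hv⟩ := ih1 (by simp)
      simp at ha; subst ha; exact hv
    have h' : ∀ χ ∈ φ ::ₘ Γ, fval v χ = true := by
      intro χ hχ
      rcases mem_cons.mp hχ with rfl | hm
      · exact hφ
      · exact h _ hm
    exact ih2 h'
  | @lcut2 φ Γ Δ _ _ _ ih1 ih2 =>
    intro h
    obtain ⟨a, ha, hv⟩ := ih1 h
    rcases mem_cons.mp ha with rfl | hm
    · obtain ⟨b, hb, _⟩ := ih2 (fun χ hχ => by simp at hχ; subst hχ; exact hv)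
      simp at hb
    · exact ⟨a, hm, hv⟩
def fsize : Fm → ℕ
  | .atom _ => 1
  | .conj a b => fsize a + fsize b + 1
  | .disj a b => fsize a + fsize b + 1
  | .neg a => fsize a + 1
  | .top => 1
  | .bot => 1

/-- Clause form (conjunctive normal form) of a sequent, with pending lists `L ▷ R`
and accumulated atomic parts `A ▷ B`. -/
def cnf : List Fm → List Fm → Multiset Fm → Multiset Fm → Finset Sqnt
  | [], [], A, B => {(A, B)}
  | Fm.atom i :: L, R, A, B => cnf L R (Fm.atom i ::ₘ A) B
  | Fm.conj φ ψ :: L, R, A, B => cnf (φ :: ψ :: L) R A B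
  | Fm.disj φ ψ :: L, R, A, B => cnf (φ :: L) R A B ∪ cnf (ψ :: L) R A B
  | Fm.neg φ :: L, R, A, B => cnf L (φ :: R) A B
  | Fm.top :: L, R, A, B => cnf L R A B
  | Fm.bot :: _, _, _, _ => ∅
  | [], Fm.atom i :: R, A, B => cnf [] R A (Fm.atom i ::ₘ B)
  | [], Fm.conj φ ψ :: R, A, B => cnf [] (φ :: R) A B ∪ cnf [] (ψ :: R) A B
  | [], Fm.disj φ ψ :: R, A, B => cnf [] (φ :: ψ :: R) A B
  | [], Fm.neg φ :: R, A, B => cnf [φ] R A B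
  | [], Fm.top :: _, _, _ => ∅
  | [], Fm.bot :: R, A, B => cnf [] R A B
termination_by L R _ _ => (L.map fsize).sum + (R.map fsize).sum
decreasing_by all_goals simp [fsize] <;> omega


lemma cnf_atomic : ∀ (L R : List Fm) (A B : Multiset Fm),
    (∀ φ ∈ A, isAtom φ) → (∀ φ ∈ B, isAtom φ) → ∀ c ∈ cnf L R A B, AtomicSeq c := by
  intro L R A B
  induction L, R, A, B using cnf.induct with
  | case1 A B =>
    intro hA hB c hc
    simp only [cnf, Finset.mem_singleton] at hc
    subst hc; exact ⟨hA, hB⟩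
  | case2 i L R A B ih =>
    intro hA hB c hc
    simp only [cnf] at hc
    refine ih ?_ hB c hc
    intro φ hφ
    rcases Multiset.mem_cons.mp hφ with rfl | hm
    · exact ⟨i, rfl⟩
    · exact hA _ hm
  | case3 φ ψ L R A B ih =>
    intro hA hB c hc
    simp only [cnf] at hc
    exact ih hA hB c hc
  | case4 φ ψ L R A B ih1 ih2 =>
    intro hA hB c hc
    simp only [cnf] at hc
    rcases Finset.mem_union.mp hc with hc | hc
    · exact ih1 hA hB c hc
    · exact ih2 hA hB c hc
  | case5 φ L R A B ih =>
    intro hA hB c hc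
    simp only [cnf] at hc
    exact ih hA hB c hc
  | case6 L R A B ih =>
    intro hA hB c hc
    simp only [cnf] at hc
    exact ih hA hB c hc
  | case7 L R A B =>
    intro hA hB c hc
    simp only [cnf] at hc
    exact absurd hc (Finset.notMem_empty c)
  | case8 i R A B ih =>
    intro hA hB c hc
    simp only [cnf] at hc
    refine ih hA ?_ c hc
    intro φ hφ
    rcases Multiset.mem_cons.mp hφ with rfl | hm
    · exact ⟨i, rfl⟩
    · exact hB _ hm
  | case9 φ ψ R A B ih1 ih2 =>
    intro hA hB c hc
    simp only [cnf] at hc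
    rcases Finset.mem_union.mp hc with hc | hc
    · exact ih1 hA hB c hc
    · exact ih2 hA hB c hc
  | case10 φ ψ R A B ih =>
    intro hA hB c hc
    simp only [cnf] at hc
    exact ih hA hB c hc
  | case11 φ R A B ih =>
    intro hA hB c hc
    simp only [cnf] at hc
    exact ih hA hB c hc
  | case12 R A B =>
    intro hA hB c hc
    simp only [cnf] at hc
    exact absurd hc (Finset.notMem_empty c)
  | case13 R A B ih =>
    intro hA hB c hc
    simp only [cnf] at hc
    exact ih hA hB c hc
lemma multiset_add_coe_cons (A : Multiset Fm) (φ : Fm) (L : List Fm) :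
    A + ↑(φ :: L) = φ ::ₘ (A + ↑L) := by
  rw [← Multiset.cons_coe, Multiset.add_cons]

/-- Every clause of a sequent is derivable from it using eliminations. -/
lemma cnf_drv (S : Set Sqnt) : ∀ (L R : List Fm) (A B : Multiset Fm),
    Drv False True False True False S (A + ↑L, B + ↑R) →
    ∀ c ∈ cnf L R A B, Drv False True False True False S c := by
  intro L R A B
  induction L, R, A, B using cnf.induct with
  | case1 A B =>
    intro h c hc
    simp only [cnf, Finset.mem_singleton] at hc
    subst hc
    simpa using h
  | case2 i L R A B ih =>
    intro h c hc
    simp only [cnf] at hc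
    refine ih ?_ c hc
    rw [multiset_add_coe_cons] at h
    rwa [Multiset.cons_add]
  | case3 φ ψ L R A B ih =>
    intro h c hc
    simp only [cnf] at hc
    refine ih ?_ c hc
    rw [multiset_add_coe_cons] at h
    rw [multiset_add_coe_cons, multiset_add_coe_cons]
    exact Drv.andLE trivial h
  | case4 φ ψ L R A B ih1 ih2 =>
    intro h c hc
    simp only [cnf] at hc
    rw [multiset_add_coe_cons] at h
    rcases Finset.mem_union.mp hc with hc | hc
    · refine ih1 ?_ c hc
      rw [multiset_add_coe_cons]
      exact Drv.orLE1 trivial h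
    · refine ih2 ?_ c hc
      rw [multiset_add_coe_cons]
      exact Drv.orLE2 trivial h
  | case5 φ L R A B ih =>
    intro h c hc
    simp only [cnf] at hc
    refine ih ?_ c hc
    rw [multiset_add_coe_cons] at h
    rw [multiset_add_coe_cons]
    exact Drv.negLE trivial h
  | case6 L R A B ih =>
    intro h c hc
    simp only [cnf] at hc
    refine ih ?_ c hc
    rw [multiset_add_coe_cons] at h
    exact Drv.topLE trivial h
  | case7 L R A B =>
    intro h c hc
    simp only [cnf] at hc
    exact absurd hc (Finset.notMem_empty c)
  | case8 i R A B ih =>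
    intro h c hc
    simp only [cnf] at hc
    refine ih ?_ c hc
    rw [multiset_add_coe_cons] at h
    rwa [Multiset.cons_add]
  | case9 φ ψ R A B ih1 ih2 =>
    intro h c hc
    simp only [cnf] at hc
    rw [multiset_add_coe_cons] at h
    rcases Finset.mem_union.mp hc with hc | hc
    · refine ih1 ?_ c hc
      rw [multiset_add_coe_cons]
      exact Drv.andRE1 trivial h
    · refine ih2 ?_ c hc
      rw [multiset_add_coe_cons]
      exact Drv.andRE2 trivial h
  | case10 φ ψ R A B ih =>
    intro h c hc
    simp only [cnf] at hc
    refine ih ?_ c hc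
    rw [multiset_add_coe_cons] at h
    rw [multiset_add_coe_cons, multiset_add_coe_cons]
    exact Drv.orRE trivial h
  | case11 φ R A B ih =>
    intro h c hc
    simp only [cnf] at hc
    refine ih ?_ c hc
    rw [multiset_add_coe_cons] at h
    rw [multiset_add_coe_cons]
    have := Drv.negRE trivial h
    simpa using this
  | case12 R A B =>
    intro h c hc
    simp only [cnf] at hc
    exact absurd hc (Finset.notMem_empty c)
  | case13 R A B ih =>
    intro h c hc
    simp only [cnf] at hc
    refine ih ?_ c hc
    rw [multiset_add_coe_cons] at h
    exact Drv.botRE trivial h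
private lemma st1 {s₁ t : Sqnt} (hd : Drv True True True True True ({s₁} : Set Sqnt) t)
    {v} (h1 : seqTrue v s₁) : seqTrue v t :=
  drv_sound hd v (by rintro u rfl; exact h1)

private lemma st2 {s₁ s₂ t : Sqnt} (hd : Drv True True True True True ({s₁, s₂} : Set Sqnt) t)
    {v} (h1 : seqTrue v s₁) (h2 : seqTrue v s₂) : seqTrue v t :=
  drv_sound hd v (by rintro u (rfl | rfl) <;> assumption)

/-- If all clauses of a sequent are true under `v`, so is the sequent. -/
lemma cnf_sem (v : ℕ → Bool) : ∀ (L R : List Fm) (A B : Multiset Fm),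
    (∀ c ∈ cnf L R A B, seqTrue v c) → seqTrue v (A + ↑L, B + ↑R) := by
  intro L R A B
  induction L, R, A, B using cnf.induct with
  | case1 A B =>
    intro h
    have hs := h (A, B) (by simp [cnf])
    simpa using hs
  | case2 i L R A B ih =>
    intro h
    have hs := ih (fun c hc => h c (by simpa only [cnf] using hc))
    rw [Multiset.cons_add] at hs
    rwa [multiset_add_coe_cons]
  | case3 φ ψ L R A B ih =>
    intro h
    have hs := ih (fun c hc => h c (by simpa only [cnf] using hc))
    rw [multiset_add_coe_cons, multiset_add_coe_cons] at hs
    rw [multiset_add_coe_cons]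
    exact st1 (Drv.andL trivial (.prem (Set.mem_singleton _))) hs
  | case4 φ ψ L R A B ih1 ih2 =>
    intro h
    have hs1 := ih1 (fun c hc => h c (by simp only [cnf]; exact Finset.mem_union_left _ hc))
    have hs2 := ih2 (fun c hc => h c (by simp only [cnf]; exact Finset.mem_union_right _ hc))
    rw [multiset_add_coe_cons] at hs1 hs2
    rw [multiset_add_coe_cons]
    exact st2 (Drv.orL trivial (.prem (by simp)) (.prem (by simp))) hs1 hs2
  | case5 φ L R A B ih =>
    intro h
    have hs := ih (fun c hc => h c (by simpa only [cnf] using hc))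
    rw [multiset_add_coe_cons] at hs
    rw [multiset_add_coe_cons]
    exact st1 (Drv.negL trivial (.prem (Set.mem_singleton _))) hs
  | case6 L R A B ih =>
    intro h
    have hs := ih (fun c hc => h c (by simpa only [cnf] using hc))
    rw [multiset_add_coe_cons]
    exact st1 (Drv.wkL Fm.top (.prem (Set.mem_singleton _))) hs
  | case7 L R A B =>
    intro _
    rw [multiset_add_coe_cons]
    intro hmem
    have := hmem Fm.bot (Multiset.mem_cons_self _ _)
    simp [fval] at this
  | case8 i R A B ih =>
    intro h
    have hs := ih (fun c hc => h c (by simpa only [cnf] using hc))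
    rw [Multiset.cons_add] at hs
    rwa [multiset_add_coe_cons]
  | case9 φ ψ R A B ih1 ih2 =>
    intro h
    have hs1 := ih1 (fun c hc => h c (by simp only [cnf]; exact Finset.mem_union_left _ hc))
    have hs2 := ih2 (fun c hc => h c (by simp only [cnf]; exact Finset.mem_union_right _ hc))
    rw [multiset_add_coe_cons] at hs1 hs2
    rw [multiset_add_coe_cons]
    exact st2 (Drv.andR trivial (.prem (by simp)) (.prem (by simp))) hs1 hs2
  | case10 φ ψ R A B ih =>
    intro h
    have hs := ih (fun c hc => h c (by simpa only [cnf] using hc))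
    rw [multiset_add_coe_cons, multiset_add_coe_cons] at hs
    rw [multiset_add_coe_cons]
    exact st1 (Drv.orR trivial (.prem (Set.mem_singleton _))) hs
  | case11 φ R A B ih =>
    intro h
    have hs := ih (fun c hc => h c (by simpa only [cnf] using hc))
    rw [multiset_add_coe_cons] at hs
    rw [multiset_add_coe_cons]
    simp only [Multiset.coe_nil, add_zero] at hs ⊢
    exact st1 (Drv.negR trivial (.prem (Set.mem_singleton _))) hs
  | case12 R A B =>
    intro _
    rw [multiset_add_coe_cons]
    intro _
    exact ⟨Fm.top, Multiset.mem_cons_self _ _, rfl⟩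
  | case13 R A B ih =>
    intro h
    have hs := ih (fun c hc => h c (by simpa only [cnf] using hc))
    rw [multiset_add_coe_cons]
    exact st1 (Drv.wkR Fm.bot (.prem (Set.mem_singleton _))) hs
def atomsF : Fm → Finset ℕ
  | .atom i => {i}
  | .conj a b => atomsF a ∪ atomsF b
  | .disj a b => atomsF a ∪ atomsF b
  | .neg a => atomsF a
  | .top => ∅
  | .bot => ∅

def atomsS (s : Sqnt) : Finset ℕ :=
  s.1.toFinset.biUnion atomsF ∪ s.2.toFinset.biUnion atomsF

def atomsC (C : Finset Sqnt) : Finset ℕ := C.biUnion atomsS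

lemma mem_atoms_iff {M : Multiset Fm} (h : ∀ φ ∈ M, isAtom φ) {p : ℕ} :
    p ∈ M.toFinset.biUnion atomsF ↔ Fm.atom p ∈ M := by
  simp only [Finset.mem_biUnion, Multiset.mem_toFinset]
  constructor
  · rintro ⟨φ, hφ, hp⟩
    obtain ⟨j, rfl⟩ := h φ hφ
    simp only [atomsF, Finset.mem_singleton] at hp
    subst hp; exact hφ
  · intro hm
    exact ⟨Fm.atom p, hm, by simp [atomsF]⟩

lemma mem_atomsS_iff {s : Sqnt} (h : AtomicSeq s) {p : ℕ} :
    p ∈ atomsS s ↔ Fm.atom p ∈ s.1 ∨ Fm.atom p ∈ s.2 := by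
  simp only [atomsS, Finset.mem_union, mem_atoms_iff h.1, mem_atoms_iff h.2]

lemma fval_update_atom {v : ℕ → Bool} {p : ℕ} {b : Bool} {j : ℕ} (h : j ≠ p) :
    fval (Function.update v p b) (Fm.atom j) = fval v (Fm.atom j) := by
  simp [fval, Function.update_of_ne h]

/-- Contraction of a replicated formula on the right. -/
lemma ctrR_rep {S : Set Sqnt} {Γ : Multiset Fm} {φ : Fm} :
    ∀ (n : ℕ) (Δ : Multiset Fm),
      Drv False True False True False S (Γ, Multiset.replicate (n+1) φ + Δ) →
      Drv False True False True False S (Γ, φ ::ₘ Δ) := by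
  intro n
  induction n with
  | zero => intro Δ h; simpa [Multiset.replicate_succ] using h
  | succ n ih =>
    intro Δ h
    have h' : Drv False True False True False S (Γ, Multiset.replicate (n+1) φ + (φ ::ₘ Δ)) := by
      have e : Multiset.replicate (n+1+1) φ + Δ = Multiset.replicate (n+1) φ + (φ ::ₘ Δ) := by
        simp [Multiset.replicate_succ, Multiset.cons_add, Multiset.add_cons]
      rwa [e] at h
    exact (ih _ h').ctrR

/-- Contraction of a replicated formula on the left. -/
lemma ctrL_rep {S : Set Sqnt} {Δ : Multiset Fm} {φ : Fm} :
    ∀ (n : ℕ) (Γ : Multiset Fm),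
      Drv False True False True False S (Multiset.replicate (n+1) φ + Γ, Δ) →
      Drv False True False True False S (φ ::ₘ Γ, Δ) := by
  intro n
  induction n with
  | zero => intro Γ h; simpa [Multiset.replicate_succ] using h
  | succ n ih =>
    intro Γ h
    have h' : Drv False True False True False S (Multiset.replicate (n+1) φ + (φ ::ₘ Γ), Δ) := by
      have e : Multiset.replicate (n+1+1) φ + Γ = Multiset.replicate (n+1) φ + (φ ::ₘ Γ) := by
        simp [Multiset.replicate_succ, Multiset.cons_add, Multiset.add_cons]
      rwa [e] at h
    exact (ih _ h').ctrL

/-- From a sequent with `φ` in the right, derive the version with a single `φ`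
and all other copies removed. -/
lemma drv_single_right {S : Set Sqnt} {Γ Δ : Multiset Fm} {φ : Fm}
    (h : Drv False True False True False S (Γ, Δ)) (hφ : φ ∈ Δ) :
    Drv False True False True False S (Γ, φ ::ₘ Δ.filter (· ≠ φ)) := by
  have hd : Δ = Multiset.replicate (Δ.count φ) φ + Δ.filter (· ≠ φ) := by
    conv_lhs => rw [← Multiset.filter_add_not (· = φ) Δ]
    rw [Multiset.filter_eq']
  obtain ⟨n, hn⟩ : ∃ n, Δ.count φ = n + 1 :=
    ⟨Δ.count φ - 1, by have := Multiset.count_pos.mpr hφ; omega⟩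
  apply ctrR_rep n
  rw [← hn, ← hd]
  exact h

lemma drv_single_left {S : Set Sqnt} {Γ Δ : Multiset Fm} {φ : Fm}
    (h : Drv False True False True False S (Γ, Δ)) (hφ : φ ∈ Γ) :
    Drv False True False True False S (φ ::ₘ Γ.filter (· ≠ φ), Δ) := by
  have hd : Γ = Multiset.replicate (Γ.count φ) φ + Γ.filter (· ≠ φ) := by
    conv_lhs => rw [← Multiset.filter_add_not (· = φ) Γ]
    rw [Multiset.filter_eq']
  obtain ⟨n, hn⟩ : ∃ n, Γ.count φ = n + 1 :=
    ⟨Γ.count φ - 1, by have := Multiset.count_pos.mpr hφ; omega⟩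
  apply ctrL_rep n
  rw [← hn, ← hd]
  exact h

/-- The resolvent of two clauses on the atom `p`. -/
def resv (p : ℕ) (c₁ c₂ : Sqnt) : Sqnt :=
  (c₁.1 + c₂.1.filter (· ≠ Fm.atom p), c₁.2.filter (· ≠ Fm.atom p) + c₂.2)

/-- One resolution step: all clauses not containing `p`, together with all
resolvents on `p`. -/
def resC (p : ℕ) (C : Finset Sqnt) : Finset Sqnt :=
  C.filter (fun s => p ∉ atomsS s) ∪
  ((C ×ˢ C).filter (fun q => Fm.atom p ∈ q.1.2 ∧ Fm.atom p ∉ q.1.1 ∧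
      Fm.atom p ∈ q.2.1 ∧ Fm.atom p ∉ q.2.2)).image (fun q => resv p q.1 q.2)
lemma resC_atomic {p : ℕ} {C : Finset Sqnt} (hC : ∀ s ∈ C, AtomicSeq s) :
    ∀ s ∈ resC p C, AtomicSeq s := by
  intro s hs
  rcases Finset.mem_union.mp hs with hs | hs
  · exact hC s (Finset.mem_filter.mp hs).1
  · obtain ⟨q, hq, rfl⟩ := Finset.mem_image.mp hs
    obtain ⟨hqC, _⟩ := Finset.mem_filter.mp hq
    obtain ⟨h1, h2⟩ := Finset.mem_product.mp hqC
    have a1 := hC _ h1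
    have a2 := hC _ h2
    constructor
    · intro φ hφ
      rcases Multiset.mem_add.mp hφ with hm | hm
      · exact a1.1 _ hm
      · exact a2.1 _ (Multiset.mem_of_mem_filter hm)
    · intro φ hφ
      rcases Multiset.mem_add.mp hφ with hm | hm
      · exact a1.2 _ (Multiset.mem_of_mem_filter hm)
      · exact a2.2 _ hm

lemma resC_drv {p : ℕ} {C : Finset Sqnt} :
    ∀ s ∈ resC p C, Drv False True False True False (↑C : Set Sqnt) s := by
  intro s hs
  rcases Finset.mem_union.mp hs with hs | hs
  · exact .prem (Finset.mem_coe.mpr (Finset.mem_filter.mp hs).1)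
  · obtain ⟨q, hq, rfl⟩ := Finset.mem_image.mp hs
    obtain ⟨hqC, hcond⟩ := Finset.mem_filter.mp hq
    obtain ⟨h1, h2⟩ := Finset.mem_product.mp hqC
    obtain ⟨hin1, _, hin2, _⟩ := hcond
    have d1 : Drv False True False True False (↑C : Set Sqnt) (q.1.1, q.1.2) :=
      .prem (Finset.mem_coe.mpr h1)
    have d2 : Drv False True False True False (↑C : Set Sqnt) (q.2.1, q.2.2) :=
      .prem (Finset.mem_coe.mpr h2)
    have d1' := drv_single_right d1 hin1
    have d2' := drv_single_left d2 hin2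
    exact Drv.cut trivial d1' d2'

lemma resC_atoms {p : ℕ} {C : Finset Sqnt} (hC : ∀ s ∈ C, AtomicSeq s) :
    atomsC (resC p C) ⊆ (atomsC C).erase p := by
  intro j hj
  obtain ⟨s, hs, hjs⟩ := Finset.mem_biUnion.mp hj
  rcases Finset.mem_union.mp hs with hs | hs
  · obtain ⟨hsC, hnp⟩ := Finset.mem_filter.mp hs
    refine Finset.mem_erase.mpr ⟨?_, Finset.mem_biUnion.mpr ⟨s, hsC, hjs⟩⟩
    rintro rfl; exact hnp hjs
  · obtain ⟨q, hq, rfl⟩ := Finset.mem_image.mp hs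
    obtain ⟨hqC, hcond⟩ := Finset.mem_filter.mp hq
    obtain ⟨h1, h2⟩ := Finset.mem_product.mp hqC
    obtain ⟨hin1, hno1, hin2, hno2⟩ := hcond
    have a1 := hC _ h1
    have a2 := hC _ h2
    have ares := resC_atomic hC _ (Finset.mem_union_right _
      (Finset.mem_image.mpr ⟨q, hq, rfl⟩))
    rw [mem_atomsS_iff ares] at hjs
    have hjne : j ≠ p := by
      rintro rfl
      rcases hjs with hm | hm
      · rcases Multiset.mem_add.mp hm with hm | hm
        · exact hno1 hm
        · exact (Multiset.of_mem_filter hm) rfl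
      · rcases Multiset.mem_add.mp hm with hm | hm
        · exact (Multiset.of_mem_filter hm) rfl
        · exact hno2 hm
    refine Finset.mem_erase.mpr ⟨hjne, ?_⟩
    rcases hjs with hm | hm
    · rcases Multiset.mem_add.mp hm with hm | hm
      · exact Finset.mem_biUnion.mpr ⟨q.1, h1, (mem_atomsS_iff a1).mpr (Or.inl hm)⟩
      · exact Finset.mem_biUnion.mpr ⟨q.2, h2,
          (mem_atomsS_iff a2).mpr (Or.inl (Multiset.mem_of_mem_filter hm))⟩
    · rcases Multiset.mem_add.mp hm with hm | hm
      · exact Finset.mem_biUnion.mpr ⟨q.1, h1,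
          (mem_atomsS_iff a1).mpr (Or.inr (Multiset.mem_of_mem_filter hm))⟩
      · exact Finset.mem_biUnion.mpr ⟨q.2, h2, (mem_atomsS_iff a2).mpr (Or.inr hm)⟩
lemma seqTrue_update_iff {v : ℕ → Bool} {p : ℕ} {b : Bool} {s : Sqnt} (ha : AtomicSeq s)
    (h1 : Fm.atom p ∉ s.1) (h2 : Fm.atom p ∉ s.2) :
    seqTrue (Function.update v p b) s ↔ seqTrue v s := by
  have key : ∀ φ, φ ∈ s.1 ∨ φ ∈ s.2 → fval (Function.update v p b) φ = fval v φ := by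
    intro φ hφ
    have hA : isAtom φ := by rcases hφ with hφ | hφ; exacts [ha.1 _ hφ, ha.2 _ hφ]
    obtain ⟨j, rfl⟩ := hA
    have hj : j ≠ p := by rintro rfl; rcases hφ with hφ | hφ; exacts [h1 hφ, h2 hφ]
    exact fval_update_atom hj
  constructor <;> intro ht hall
  · obtain ⟨φ, hφ, hv⟩ := ht (fun φ hφ => by rw [key φ (Or.inl hφ)]; exact hall φ hφ)
    exact ⟨φ, hφ, by rw [← key φ (Or.inr hφ)]; exact hv⟩
  · obtain ⟨φ, hφ, hv⟩ := ht (fun φ hφ => by rw [← key φ (Or.inl hφ)]; exact hall φ hφ)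
    exact ⟨φ, hφ, by rw [key φ (Or.inr hφ)]; exact hv⟩

lemma resC_sem {p : ℕ} {C : Finset Sqnt} (hC : ∀ s ∈ C, AtomicSeq s) {v : ℕ → Bool}
    (h : ∀ s ∈ resC p C, seqTrue v s) :
    (∀ s ∈ C, seqTrue (Function.update v p false) s) ∨
    (∀ s ∈ C, seqTrue (Function.update v p true) s) := by
  by_contra hcon
  push_neg at hcon
  obtain ⟨⟨s₁, hs₁C, hs₁⟩, s₂, hs₂C, hs₂⟩ := hcon
  rw [seqTrue] at hs₁ hs₂
  push_neg at hs₁ hs₂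
  obtain ⟨hL₁, hR₁⟩ := hs₁
  obtain ⟨hL₂, hR₂⟩ := hs₂
  have hnp1 : Fm.atom p ∉ s₁.1 := by
    intro hm
    have := hL₁ _ hm
    simp [fval] at this
  have hnp2 : Fm.atom p ∉ s₂.2 := by
    intro hm
    exact hR₂ _ hm (by simp [fval])
  have hp1 : Fm.atom p ∈ s₁.2 := by
    by_contra hno
    have hpf : p ∉ atomsS s₁ := by rw [mem_atomsS_iff (hC _ hs₁C)]; tauto
    have hmem : s₁ ∈ resC p C :=
      Finset.mem_union_left _ (Finset.mem_filter.mpr ⟨hs₁C, hpf⟩)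
    have hv1 := h _ hmem
    have := (seqTrue_update_iff (b := false) (hC _ hs₁C) hnp1 hno).mpr hv1
    exact absurd this (by rw [seqTrue]; push_neg; exact ⟨hL₁, hR₁⟩)
  have hp2 : Fm.atom p ∈ s₂.1 := by
    by_contra hno
    have hpf : p ∉ atomsS s₂ := by rw [mem_atomsS_iff (hC _ hs₂C)]; tauto
    have hmem : s₂ ∈ resC p C :=
      Finset.mem_union_left _ (Finset.mem_filter.mpr ⟨hs₂C, hpf⟩)
    have hv2 := h _ hmem
    have := (seqTrue_update_iff (b := true) (hC _ hs₂C) hno hnp2).mpr hv2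
    exact absurd this (by rw [seqTrue]; push_neg; exact ⟨hL₂, hR₂⟩)
  have hr : resv p s₁ s₂ ∈ resC p C := by
    refine Finset.mem_union_right _ (Finset.mem_image.mpr ⟨(s₁, s₂), ?_, rfl⟩)
    exact Finset.mem_filter.mpr ⟨Finset.mem_product.mpr ⟨hs₁C, hs₂C⟩, hp1, hnp1, hp2, hnp2⟩
  have htr := h _ hr
  have hall : ∀ φ ∈ (resv p s₁ s₂).1, fval v φ = true := by
    intro φ hφ
    rcases Multiset.mem_add.mp hφ with hm | hm
    · obtain ⟨j, rfl⟩ := (hC _ hs₁C).1 _ hm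
      have hj : j ≠ p := by rintro rfl; exact hnp1 hm
      rw [← fval_update_atom (b := false) hj]
      exact hL₁ _ hm
    · have hmem := Multiset.mem_of_mem_filter hm
      have hne := Multiset.of_mem_filter hm
      obtain ⟨j, rfl⟩ := (hC _ hs₂C).1 _ hmem
      have hj : j ≠ p := by rintro rfl; exact hne rfl
      rw [← fval_update_atom (b := true) hj]
      exact hL₂ _ hmem
  obtain ⟨φ, hφ, hv⟩ := htr hall
  rcases Multiset.mem_add.mp hφ with hm | hm
  · have hmem := Multiset.mem_of_mem_filter hm
    have hne := Multiset.of_mem_filter hm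
    obtain ⟨j, rfl⟩ := (hC _ hs₁C).2 _ hmem
    have hj : j ≠ p := by rintro rfl; exact hne rfl
    rw [← fval_update_atom (b := false) hj] at hv
    exact hR₁ _ hmem hv
  · obtain ⟨j, rfl⟩ := (hC _ hs₂C).2 _ hm
    have hj : j ≠ p := by rintro rfl; exact hnp2 hm
    rw [← fval_update_atom (b := true) hj] at hv
    exact hR₂ _ hm hv
lemma resolution_base {C : Finset Sqnt} (hemp : atomsC C = ∅) (hat : ∀ s ∈ C, AtomicSeq s)
    (huns : ∀ v : ℕ → Bool, ∃ s ∈ C, ¬ seqTrue v s) :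
    Drv False True False True False (↑C : Set Sqnt) ((0 : Multiset Fm), (0 : Multiset Fm)) := by
  obtain ⟨s, hsC, _⟩ := huns (fun _ => true)
  have h1 : s.1 = 0 := by
    refine Multiset.eq_zero_of_forall_notMem ?_
    intro φ hφ
    obtain ⟨j, rfl⟩ := (hat _ hsC).1 _ hφ
    have : j ∈ atomsC C := Finset.mem_biUnion.mpr
      ⟨s, hsC, (mem_atomsS_iff (hat _ hsC)).mpr (Or.inl hφ)⟩
    simp [hemp] at this
  have h2 : s.2 = 0 := by
    refine Multiset.eq_zero_of_forall_notMem ?_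
    intro φ hφ
    obtain ⟨j, rfl⟩ := (hat _ hsC).2 _ hφ
    have : j ∈ atomsC C := Finset.mem_biUnion.mpr
      ⟨s, hsC, (mem_atomsS_iff (hat _ hsC)).mpr (Or.inr hφ)⟩
    simp [hemp] at this
  have hs0 : s = ((0 : Multiset Fm), (0 : Multiset Fm)) := by
    cases s; simp_all
  exact hs0 ▸ Drv.prem (Finset.mem_coe.mpr hsC)

/-- Completeness of resolution: an unsatisfiable finite set of atomic sequents
derives the empty sequent. -/
lemma resolution : ∀ (n : ℕ) (C : Finset Sqnt), (atomsC C).card ≤ n →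
    (∀ s ∈ C, AtomicSeq s) → (∀ v : ℕ → Bool, ∃ s ∈ C, ¬ seqTrue v s) →
    Drv False True False True False (↑C : Set Sqnt) ((0 : Multiset Fm), (0 : Multiset Fm)) := by
  intro n
  induction n with
  | zero =>
    intro C hcard hat huns
    exact resolution_base (Finset.card_eq_zero.mp (Nat.le_zero.mp hcard)) hat huns
  | succ n ih =>
    intro C hcard hat huns
    by_cases hemp : atomsC C = ∅
    · exact resolution_base hemp hat huns
    · obtain ⟨p, hpC⟩ := Finset.nonempty_iff_ne_empty.mpr hemp
      have hat' := resC_atomic (p := p) hat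
      have hsub := resC_atoms (p := p) hat
      have hcard' : (atomsC (resC p C)).card ≤ n := by
        have hle : (atomsC (resC p C)).card ≤ ((atomsC C).erase p).card :=
          Finset.card_le_card hsub
        have he : ((atomsC C).erase p).card = (atomsC C).card - 1 :=
          Finset.card_erase_of_mem hpC
        have hpos : 0 < (atomsC C).card := Finset.card_pos.mpr ⟨p, hpC⟩
        omega
      have huns' : ∀ v : ℕ → Bool, ∃ s ∈ resC p C, ¬ seqTrue v s := by
        intro v
        by_contra hno
        push_neg at hno
        rcases resC_sem hat hno with hw | hw
        · obtain ⟨s, hsC, hs⟩ := huns (Function.update v p false)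
          exact hs (hw _ hsC)
        · obtain ⟨s, hsC, hs⟩ := huns (Function.update v p true)
          exact hs (hw _ hsC)
      exact drv_trans (ih (resC p C) hcard' hat' huns')
        (fun t ht => resC_drv t (Finset.mem_coe.mp ht))
/-- Antiadmissibility of Identity: in the calculus consisting of Cut, the common
structural rules, and all elimination rules, the empty sequent is derivable from a set
of premises with Identity iff it is derivable without Identity. -/
theorem stmt9 (S : Set Sqnt) :
    Drv False True True True False S ((0 : Multiset Fm), (0 : Multiset Fm)) ↔
    Drv False True False True False S ((0 : Multiset Fm), (0 : Multiset Fm)) := by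
  constructor
  · intro h
    obtain ⟨T, hTS, hT⟩ := drv_finite h
    have huns : ∀ v : ℕ → Bool, ∃ s ∈ T, ¬ seqTrue v s := by
      intro v
      by_contra hno
      push_neg at hno
      have hsnd := drv_sound hT v (fun t ht => hno t (Finset.mem_coe.mp ht))
      obtain ⟨φ, hφ, _⟩ := hsnd (by intro φ hφ; exact absurd hφ (by simp))
      exact absurd hφ (by simp)
    set C : Finset Sqnt := T.biUnion (fun s => cnf s.1.toList s.2.toList 0 0) with hCdef
    have hat : ∀ s ∈ C, AtomicSeq s := by
      intro s hs
      obtain ⟨t, htT, hst⟩ := Finset.mem_biUnion.mp hs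
      exact cnf_atomic _ _ 0 0 (by simp) (by simp) s hst
    have hCuns : ∀ v : ℕ → Bool, ∃ s ∈ C, ¬ seqTrue v s := by
      intro v
      by_contra hno
      push_neg at hno
      obtain ⟨t, htT, ht⟩ := huns v
      apply ht
      have := cnf_sem v t.1.toList t.2.toList 0 0
        (fun c hc => hno c (Finset.mem_biUnion.mpr ⟨t, htT, hc⟩))
      simpa [Multiset.coe_toList] using this
    have hCdrv : ∀ c ∈ C, Drv False True False True False (↑T : Set Sqnt) c := by
      intro c hc
      obtain ⟨t, htT, hct⟩ := Finset.mem_biUnion.mp hc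
      refine cnf_drv _ t.1.toList t.2.toList 0 0 ?_ c hct
      have hpt : Drv False True False True False (↑T : Set Sqnt) t :=
        .prem (Finset.mem_coe.mpr htT)
      simpa [Multiset.coe_toList] using hpt
    have hres := resolution (atomsC C).card C le_rfl hat hCuns
    have h1 : Drv False True False True False (↑T : Set Sqnt)
        ((0 : Multiset Fm), (0 : Multiset Fm)) :=
      drv_trans hres (fun c hc => hCdrv c (Finset.mem_coe.mp hc))
    exact h1.dmono hTS
  · exact drv_of_noid
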